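/- arXiv:2102.07558 — 4 statements merged into one kernel-verified Lean document; each statement's English description precedes it below -/
import Mathlib

section
/- Assume there exists a bounded function η ∈ C¹([0,∞)) with η' = -b/a on [0,∞) (bounded-drift condition), and that λ₁ > 0. Then (L, B) satisfies the Maximum Principle on (0,∞): every v ∈ C²([0,∞)) with L v ≤ 0 on (0,∞), -a(0)v'(0) + γ v(0) ≤ 0, and sup v < +∞ satisfies v ≤ 0 on [0,∞). -/
open Topology

/-- The one-dimensional elliptic operator `L u = -(a u')' - b u' - c u`. -/
noncomputable def L1 (a b c : ℝ → ℝ) (u : ℝ → ℝ) (x : ℝ) : ℝ :=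
  -(deriv (fun y => a y * deriv u y) x) - b x * deriv u x - c x * u x

/-- `f` is locally `α`-Hölder continuous on the set `s ⊆ ℝ`. -/
def LocHolderOn (α : ℝ) (f : ℝ → ℝ) (s : Set ℝ) : Prop :=
  ∀ x ∈ s, ∃ U ∈ 𝓝[s] x, ∃ C : NNReal, HolderOnWith C α.toNNReal f U

/-- The generalized principal eigenvalue of `(L, B)` on `(0,∞)` with Robin boundary
operator `B u = -a(0)u'(0) + γ u(0)`:
`λ₁ = sup{λ : ∃ φ ∈ C²([0,∞)), φ > 0 on [0,∞), Lφ ≥ λφ on (0,∞), Bφ ≥ 0}`. -/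
noncomputable def lambda1Robin (a b c : ℝ → ℝ) (γ : ℝ) : ℝ :=
  sSup {l : ℝ | ∃ φ : ℝ → ℝ, ContDiffOn ℝ 2 φ (Set.Ici 0) ∧
    (∀ x : ℝ, 0 ≤ x → 0 < φ x) ∧
    (∀ x : ℝ, 0 < x → l * φ x ≤ L1 a b c φ x) ∧
    0 ≤ -(a 0 * derivWithin φ (Set.Ici 0) 0) + γ * φ 0}

/-!
Since `λ₁ > 0` there is `φ > 0` with `Lφ ≥ lφ` for some `l > 0` and `Bφ ≥ 0`. With the
integrating factor `e^{-η}`, the weighted Wronskian `W = e^{-η} a (φ v' - φ' v)` satisfies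
`W' = e^{-η} (v Lφ - φ Lv) > 0` wherever `v > 0`, and `(v/φ)' = W / (e^{-η} a φ²)`.

Suppose `v > 0` somewhere. If `W ≥ 0` at some point where `v > 0`, then from there on `W`
and `w = v/φ` increase, so `v` stays positive and `W` eventually exceeds a positive constant;
as `v = wφ ≤ sup v` bounds `φ` by a multiple of `1/w`, this gives a Riccati inequality
`w' ≥ β w²`, which has no positive solution on a half-line. Otherwise `W < 0` wherever
`v > 0`; the Robin conditions give `W(0) ≥ 0`, so `v(0) ≤ 0`, and on the last interval
`(q, x]` where `v > 0` the ratio `w` decreases from `w(q) ≤ 0`, a contradiction.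
-/

open Set Real

theorem ContDiffOn.hasDerivAt_derivWithin_Ici {f : ℝ → ℝ} {n : WithTop ℕ∞} {s x : ℝ}
    (hf : ContDiffOn ℝ n f (Ici s)) (hn : n ≠ 0) (hx : s < x) :
    HasDerivAt f (derivWithin f (Ici s) x) x := by
  rw [derivWithin_of_mem_nhds (Ici_mem_nhds hx)]
  exact ((hf.contDiffAt (Ici_mem_nhds hx)).differentiableAt hn).hasDerivAt

theorem exists_first_nonpos {f : ℝ → ℝ} {s t : ℝ} (hst : s ≤ t) (hf : ContinuousOn f (Icc s t))
    (ht : f t ≤ 0) : ∃ r ∈ Icc s t, f r ≤ 0 ∧ ∀ y ∈ Ico s r, 0 < f y := by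
  have hS : IsClosed (Icc s t ∩ f ⁻¹' Iic 0) :=
    hf.preimage_isClosed_of_isClosed isClosed_Icc isClosed_Iic
  have hbdd : BddBelow (Icc s t ∩ f ⁻¹' Iic 0) := ⟨s, fun y hy => hy.1.1⟩
  obtain ⟨hr, hfr⟩ := hS.csInf_mem ⟨t, right_mem_Icc.2 hst, ht⟩ hbdd
  exact ⟨_, hr, hfr, fun y hy => lt_of_not_ge fun hfy =>
    hy.2.not_ge (csInf_le hbdd ⟨⟨hy.1, hy.2.le.trans hr.2⟩, hfy⟩)⟩

theorem exists_last_nonpos {f : ℝ → ℝ} {s t : ℝ} (hst : s ≤ t) (hf : ContinuousOn f (Icc s t))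
    (hs : f s ≤ 0) : ∃ r ∈ Icc s t, f r ≤ 0 ∧ ∀ y ∈ Ioc r t, 0 < f y := by
  have hS : IsClosed (Icc s t ∩ f ⁻¹' Iic 0) :=
    hf.preimage_isClosed_of_isClosed isClosed_Icc isClosed_Iic
  have hbdd : BddAbove (Icc s t ∩ f ⁻¹' Iic 0) := ⟨t, fun y hy => hy.1.2⟩
  obtain ⟨hr, hfr⟩ := hS.csSup_mem ⟨s, left_mem_Icc.2 hst, hs⟩ hbdd
  exact ⟨_, hr, hfr, fun y hy => lt_of_not_ge fun hfy =>
    hy.1.not_ge (le_csSup hbdd ⟨⟨hr.1.trans hy.1.le, hy.2⟩, hfy⟩)⟩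

theorem false_of_riccati {w w' : ℝ → ℝ} {s β : ℝ} (hβ : 0 < β) (hw : ContinuousOn w (Ici s))
    (hwd : ∀ x, s < x → HasDerivAt w (w' x) x) (hs : 0 < w s)
    (hge : ∀ x, s < x → β * w x ^ 2 ≤ w' x) : False := by
  have hmono : MonotoneOn w (Ici s) := by
    refine monotoneOn_of_hasDerivWithinAt_nonneg (f' := w') (convex_Ici s) hw (fun x hx => ?_)
      (fun x hx => ?_) <;> rw [interior_Ici] at hx
    · exact (hwd x hx).hasDerivWithinAt
    · exact (by positivity : 0 ≤ β * w x ^ 2).trans (hge x hx)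
  have hpos : ∀ x, s ≤ x → 0 < w x := fun x hx => hs.trans_le (hmono self_mem_Ici hx hx)
  -- `-1/w` has derivative `w'/w² ≥ β`, yet stays negative.
  have hrecip : MonotoneOn (fun x => -(w x)⁻¹ - β * x) (Ici s) := by
    refine monotoneOn_of_hasDerivWithinAt_nonneg (f' := fun x => w' x / w x ^ 2 - β)
      (convex_Ici s) ?_ (fun x hx => ?_) (fun x hx => ?_)
    · exact (hw.inv₀ fun x hx => (hpos x hx).ne').neg.sub (continuousOn_const.mul continuousOn_id)
    all_goals rw [interior_Ici] at hx
    · refine HasDerivAt.hasDerivWithinAt ?_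
      convert ((hwd x hx).fun_inv (hpos x hx.le).ne').fun_neg.fun_sub
        ((hasDerivAt_id' x).const_mul β) using 1
      ring
    · rw [sub_nonneg, le_div_iff₀ (pow_pos (hpos x hx.le) 2)]
      exact hge x hx
  have hz : s ≤ s + (w s)⁻¹ / β := le_add_of_nonneg_right (by positivity)
  have hgrowth := hrecip self_mem_Ici hz hz
  have hβz : β * (s + (w s)⁻¹ / β) = β * s + (w s)⁻¹ := by field_simp
  linarith [inv_pos.2 (hpos _ hz)]

section RatioWronskian

variable {w W W' ρ : ℝ → ℝ} {s : ℝ}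

theorem pos_of_wronskian_nonneg (hw : ContinuousOn w (Ici s)) (hW : ContinuousOn W (Ici s))
    (hWd : ∀ x, s < x → HasDerivAt W (W' x) x) (hW' : ∀ x, s < x → 0 < w x → 0 < W' x)
    (hwd : ∀ x, s < x → HasDerivAt w (W x / ρ x) x) (hρ : ∀ x, s ≤ x → 0 < ρ x)
    {ξ : ℝ} (hξ : s ≤ ξ) (hwξ : 0 < w ξ) (hWξ : 0 ≤ W ξ) {x : ℝ} (hx : ξ ≤ x) : 0 < w x := by
  by_contra! hwx
  have hsub : ∀ {t}, Icc ξ t ⊆ Ici s := fun hy => hξ.trans hy.1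
  obtain ⟨t, ⟨hξt, -⟩, hwt, hpos⟩ := exists_first_nonpos hx (hw.mono hsub) hwx
  have hWmono : MonotoneOn W (Icc ξ t) := by
    refine monotoneOn_of_hasDerivWithinAt_nonneg (f' := W') (convex_Icc ξ t) (hW.mono hsub)
      (fun y hy => ?_) (fun y hy => ?_) <;> rw [interior_Icc] at hy
    · exact (hWd y (hξ.trans_lt hy.1)).hasDerivWithinAt
    · exact (hW' y (hξ.trans_lt hy.1) (hpos y ⟨hy.1.le, hy.2⟩)).le
  have hwmono : MonotoneOn w (Icc ξ t) := by
    refine monotoneOn_of_hasDerivWithinAt_nonneg (f' := fun y => W y / ρ y) (convex_Icc ξ t)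
      (hw.mono hsub) (fun y hy => ?_) (fun y hy => ?_) <;> rw [interior_Icc] at hy
    · exact (hwd y (hξ.trans_lt hy.1)).hasDerivWithinAt
    · have hWy := hWmono (left_mem_Icc.2 hξt) (Ioo_subset_Icc_self hy) hy.1.le
      exact div_nonneg (hWξ.trans hWy) (hρ y (hξ.trans hy.1.le)).le
  linarith [hwmono (left_mem_Icc.2 hξt) (right_mem_Icc.2 hξt) hξt]

theorem false_of_wronskian_nonneg {C : ℝ} (hw : ContinuousOn w (Ici s))
    (hW : ContinuousOn W (Ici s)) (hWd : ∀ x, s < x → HasDerivAt W (W' x) x)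
    (hW' : ∀ x, s < x → 0 < w x → 0 < W' x) (hwd : ∀ x, s < x → HasDerivAt w (W x / ρ x) x)
    (hρ : ∀ x, s ≤ x → 0 < ρ x) (hρw : ∀ x, s ≤ x → 0 < w x → ρ x * w x ^ 2 ≤ C)
    {ξ : ℝ} (hξ : s ≤ ξ) (hwξ : 0 < w ξ) (hWξ : 0 ≤ W ξ) : False := by
  have hwpos : ∀ x, ξ ≤ x → 0 < w x := fun x =>
    pos_of_wronskian_nonneg hw hW hWd hW' hwd hρ hξ hwξ hWξ
  have hWmono : StrictMonoOn W (Ici ξ) := by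
    refine strictMonoOn_of_hasDerivWithinAt_pos (f' := W') (convex_Ici ξ)
      (hW.mono (Ici_subset_Ici.2 hξ)) (fun y hy => ?_) (fun y hy => ?_) <;>
      rw [interior_Ici] at hy
    · exact (hWd y (hξ.trans_lt hy)).hasDerivWithinAt
    · exact hW' y (hξ.trans_lt hy) (hwpos y hy.le)
  have hW₁ : 0 < W (ξ + 1) := hWξ.trans_lt (hWmono self_mem_Ici (by simp) (lt_add_one ξ))
  have hC : 0 < C := (mul_pos (hρ ξ hξ) (pow_pos hwξ 2)).trans_le (hρw ξ hξ hwξ)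
  -- Past `ξ + 1`, `w' = W/ρ ≥ W(ξ+1)/ρ ≥ (W(ξ+1)/C) w²`.
  refine false_of_riccati (s := ξ + 1) (div_pos hW₁ hC)
    (hw.mono (Ici_subset_Ici.2 (by linarith))) (fun x hx => hwd x (by linarith))
    (hwpos _ (by linarith)) fun x hx => ?_
  have hsx : s ≤ x := by linarith
  have hWx : W (ξ + 1) ≤ W x := hWmono.monotoneOn (by simp) (show ξ ≤ x by linarith) hx.le
  rw [div_mul_eq_mul_div, div_le_div_iff₀ hC (hρ x hsx)]
  calc W (ξ + 1) * w x ^ 2 * ρ x = W (ξ + 1) * (ρ x * w x ^ 2) := by ring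
    _ ≤ W (ξ + 1) * C := mul_le_mul_of_nonneg_left (hρw x hsx (hwpos x (by linarith))) hW₁.le
    _ ≤ W x * C := mul_le_mul_of_nonneg_right hWx hC.le

theorem nonpos_of_wronskian {C : ℝ} (hw : ContinuousOn w (Ici s)) (hW : ContinuousOn W (Ici s))
    (hWd : ∀ x, s < x → HasDerivAt W (W' x) x) (hW' : ∀ x, s < x → 0 < w x → 0 < W' x)
    (hwd : ∀ x, s < x → HasDerivAt w (W x / ρ x) x) (hρ : ∀ x, s ≤ x → 0 < ρ x)
    (hρw : ∀ x, s ≤ x → 0 < w x → ρ x * w x ^ 2 ≤ C) (hs : 0 < w s → 0 ≤ W s)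
    {x : ℝ} (hx : s ≤ x) : w x ≤ 0 := by
  by_contra! hwx
  have hWneg : ∀ y, s ≤ y → 0 < w y → W y < 0 := fun y hy hwy =>
    lt_of_not_ge fun hWy => false_of_wronskian_nonneg hw hW hWd hW' hwd hρ hρw hy hwy hWy
  have hws : w s ≤ 0 := le_of_not_gt fun h => (hWneg s le_rfl h).not_ge (hs h)
  obtain ⟨q, ⟨hq, hqx⟩, hwq, hpos⟩ := exists_last_nonpos hx (hw.mono Icc_subset_Ici_self) hws
  have hanti : AntitoneOn w (Icc q x) := by
    refine antitoneOn_of_hasDerivWithinAt_nonpos (f' := fun y => W y / ρ y) (convex_Icc q x)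
      (hw.mono fun y hy => hq.trans hy.1) (fun y hy => ?_) (fun y hy => ?_) <;>
      rw [interior_Icc] at hy
    · exact (hwd y (hq.trans_lt hy.1)).hasDerivWithinAt
    · have hsy : s ≤ y := hq.trans hy.1.le
      exact (div_neg_of_neg_of_pos (hWneg y hsy (hpos y ⟨hy.1, hy.2.le⟩)) (hρ y hsy)).le
  linarith [hanti (left_mem_Icc.2 hqx) (right_mem_Icc.2 hqx) hqx]

end RatioWronskian

/-- `e^{-η}` is an integrating factor for `L`: if `η' = -b/a` then
`(e^{-η} a u')' = -e^{-η} (L u + c u)`, so `(e^{-η} a (φ v' - φ' v))' = e^{-η} (v Lφ - φ Lv)`. -/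
noncomputable def weightedWronskian (a η φ v : ℝ → ℝ) (x : ℝ) : ℝ :=
  exp (-η x) * a x * (φ x * derivWithin v (Ici 0) x - derivWithin φ (Ici 0) x * v x)

theorem hasDerivAt_exp_neg_mul_mul_deriv {a b c η u : ℝ → ℝ} {x : ℝ}
    (ha : DifferentiableAt ℝ a x) (hax : a x ≠ 0) (hη : HasDerivAt η (-(b x / a x)) x)
    (hu : DifferentiableAt ℝ (deriv u) x) :
    HasDerivAt (fun y => exp (-η y) * (a y * deriv u y))
      (exp (-η x) * (-L1 a b c u x - c x * u x)) x := by
  refine (hη.fun_neg.exp.fun_mul (ha.fun_mul hu).hasDerivAt).congr_deriv ?_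
  simp only [L1]
  field_simp
  ring

theorem hasDerivAt_weightedWronskian {a b c η φ v : ℝ → ℝ} {x : ℝ} (hx : 0 < x)
    (ha : DifferentiableAt ℝ a x) (hax : a x ≠ 0) (hη : HasDerivAt η (-(b x / a x)) x)
    (hφ : ContDiffOn ℝ 2 φ (Ioi 0)) (hv : ContDiffOn ℝ 2 v (Ioi 0)) :
    HasDerivAt (weightedWronskian a η φ v)
      (exp (-η x) * (v x * L1 a b c φ x - φ x * L1 a b c v x)) x := by
  have hdiff : ∀ {u : ℝ → ℝ}, ContDiffOn ℝ 2 u (Ioi 0) →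
      DifferentiableAt ℝ u x ∧ DifferentiableAt ℝ (deriv u) x := fun hu =>
    ⟨(hu.differentiableOn two_ne_zero x hx).differentiableAt (Ioi_mem_nhds hx),
      ((hu.deriv_of_isOpen isOpen_Ioi (m := 1) le_rfl).differentiableOn one_ne_zero x
        hx).differentiableAt (Ioi_mem_nhds hx)⟩
  have hflux : ∀ {u : ℝ → ℝ}, ContDiffOn ℝ 2 u (Ioi 0) → _ := fun hu =>
    hasDerivAt_exp_neg_mul_mul_deriv (c := c) ha hax hη (hdiff hu).2
  have heq : weightedWronskian a η φ v =ᶠ[𝓝 x] fun y =>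
      φ y * (exp (-η y) * (a y * deriv v y)) - v y * (exp (-η y) * (a y * deriv φ y)) := by
    filter_upwards [Ioi_mem_nhds hx] with y (hy : 0 < y)
    simp only [weightedWronskian, derivWithin_of_mem_nhds (Ici_mem_nhds hy)]
    ring
  refine HasDerivAt.congr_of_eventuallyEq ?_ heq
  refine (((hdiff hφ).1.hasDerivAt.fun_mul (hflux hv)).fun_sub
    ((hdiff hv).1.hasDerivAt.fun_mul (hflux hφ))).congr_deriv ?_
  ring

theorem hasDerivAt_div_eq_weightedWronskian {a η φ v : ℝ → ℝ} {x : ℝ} (hx : 0 < x)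
    (hax : a x ≠ 0) (hφx : φ x ≠ 0) (hφ : DifferentiableAt ℝ φ x) (hv : DifferentiableAt ℝ v x) :
    HasDerivAt (fun y => v y / φ y)
      (weightedWronskian a η φ v x / (exp (-η x) * a x * φ x ^ 2)) x := by
  refine (hv.hasDerivAt.fun_div hφ.hasDerivAt hφx).congr_deriv ?_
  simp only [weightedWronskian, derivWithin_of_mem_nhds (Ici_mem_nhds hx)]
  field_simp

theorem continuousOn_weightedWronskian {a η φ v : ℝ → ℝ} (ha : ContinuousOn a (Ici 0))
    (hη : ContinuousOn η (Ici 0)) (hφ : ContDiffOn ℝ 1 φ (Ici 0))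
    (hv : ContDiffOn ℝ 1 v (Ici 0)) : ContinuousOn (weightedWronskian a η φ v) (Ici 0) :=
  (hη.neg.rexp.mul ha).mul
    ((hφ.continuousOn.mul (hv.continuousOn_derivWithin (uniqueDiffOn_Ici 0) le_rfl)).sub
      ((hφ.continuousOn_derivWithin (uniqueDiffOn_Ici 0) le_rfl).mul hv.continuousOn))

theorem weightedWronskian_zero_nonneg {a η φ v : ℝ → ℝ} {γ : ℝ} (hφ0 : 0 ≤ φ 0) (hv0 : 0 ≤ v 0)
    (hφ : 0 ≤ -(a 0 * derivWithin φ (Ici 0) 0) + γ * φ 0)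
    (hv : -(a 0 * derivWithin v (Ici 0) 0) + γ * v 0 ≤ 0) :
    0 ≤ weightedWronskian a η φ v 0 := by
  rw [weightedWronskian, mul_assoc]
  refine mul_nonneg (exp_pos _).le ?_
  nlinarith [mul_le_mul_of_nonneg_left hφ hv0, mul_le_mul_of_nonneg_left hv hφ0]

theorem exp_neg_mul_mul_sq_mul_div_sq_le {η a φ v Mη Ma K : ℝ} (hη : |η| ≤ Mη) (ha : 0 < a)
    (hMa : |a| ≤ Ma) (hφ : 0 < φ) (hv : 0 < v) (hK : v ≤ K) :
    exp (-η) * a * φ ^ 2 * (v / φ) ^ 2 ≤ exp Mη * Ma * K ^ 2 := by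
  have haMa : a ≤ Ma := (le_abs_self a).trans hMa
  calc exp (-η) * a * φ ^ 2 * (v / φ) ^ 2 = exp (-η) * a * v ^ 2 := by field_simp
    _ ≤ exp Mη * Ma * K ^ 2 :=
      mul_le_mul (mul_le_mul (exp_le_exp.2 ((neg_le_abs η).trans hη)) haMa ha.le (exp_pos _).le)
        (pow_le_pow_left₀ hv.le hK 2) (sq_nonneg _) (mul_nonneg (exp_pos _).le (ha.le.trans haMa))

theorem exists_supersolution_of_lambda1Robin_pos {a b c : ℝ → ℝ} {γ : ℝ}
    (h : 0 < lambda1Robin a b c γ) :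
    ∃ l, 0 < l ∧ ∃ φ : ℝ → ℝ, ContDiffOn ℝ 2 φ (Ici 0) ∧ (∀ x, 0 ≤ x → 0 < φ x) ∧
      (∀ x, 0 < x → l * φ x ≤ L1 a b c φ x) ∧
      0 ≤ -(a 0 * derivWithin φ (Ici 0) 0) + γ * φ 0 := by
  unfold lambda1Robin at h
  obtain ⟨l, hl, hlpos⟩ := exists_lt_of_lt_csSup (nonempty_iff_ne_empty.2 fun he => by
    rw [he, Real.sSup_empty] at h
    exact h.false) h
  exact ⟨l, hlpos, hl⟩

theorem robin_maximum_principle_of_lambda1_pos_general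
    (γ : ℝ)
    (a b c : ℝ → ℝ)
    (habdd : ∃ M : ℝ, ∀ x : ℝ, 0 ≤ x → |a x| ≤ M)
    (haC1 : ContDiffOn ℝ 1 a (Set.Ici 0))
    (hapos : ∀ x : ℝ, 0 ≤ x → 0 < a x)
    (hdrift : ∃ η : ℝ → ℝ, ContDiffOn ℝ 1 η (Set.Ici 0) ∧
      (∃ M : ℝ, ∀ x : ℝ, 0 ≤ x → |η x| ≤ M) ∧
      ∀ x : ℝ, 0 ≤ x → derivWithin η (Set.Ici 0) x = -(b x / a x))
    (hpos : 0 < lambda1Robin a b c γ)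
    (v : ℝ → ℝ) (hv : ContDiffOn ℝ 2 v (Set.Ici 0))
    (hsub : ∀ x : ℝ, 0 < x → L1 a b c v x ≤ 0)
    (hrobin : -(a 0 * derivWithin v (Set.Ici 0) 0) + γ * v 0 ≤ 0)
    (hbdd : BddAbove (v '' Set.Ici 0)) :
    ∀ x : ℝ, 0 ≤ x → v x ≤ 0 := by
  obtain ⟨l, hl, φ, hφ, hφpos, hLφ, hBφ⟩ := exists_supersolution_of_lambda1Robin_pos hpos
  obtain ⟨η, hηC1, ⟨Mη, hMη⟩, hηd⟩ := hdrift
  obtain ⟨Ma, hMa⟩ := habdd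
  obtain ⟨K, hK⟩ := hbdd
  have hv_pos : ∀ x, 0 ≤ x → 0 < v x / φ x → 0 < v x := fun x hx h =>
    (div_pos_iff_of_pos_right (hφpos x hx)).1 h
  intro x hx
  have hratio : v x / φ x ≤ 0 := nonpos_of_wronskian (W := weightedWronskian a η φ v)
    (ρ := fun x => exp (-η x) * a x * φ x ^ 2) (C := exp Mη * Ma * K ^ 2)
    (hv.continuousOn.div hφ.continuousOn fun x hx => (hφpos x hx).ne')
    (continuousOn_weightedWronskian haC1.continuousOn hηC1.continuousOn
      (hφ.of_le one_le_two) (hv.of_le one_le_two))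
    (fun x hx => hasDerivAt_weightedWronskian hx
      (haC1.hasDerivAt_derivWithin_Ici one_ne_zero hx).differentiableAt (hapos x hx.le).ne'
      (hηd x hx.le ▸ hηC1.hasDerivAt_derivWithin_Ici one_ne_zero hx)
      (hφ.mono Ioi_subset_Ici_self) (hv.mono Ioi_subset_Ici_self))
    (fun x hx h => by
      have hvx := hv_pos x hx.le h
      refine mul_pos (exp_pos _) ?_
      nlinarith [mul_le_mul_of_nonneg_left (hLφ x hx) hvx.le, hsub x hx, hφpos x hx.le,
        mul_pos (mul_pos hvx hl) (hφpos x hx.le)])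
    (fun x hx => hasDerivAt_div_eq_weightedWronskian hx (hapos x hx.le).ne' (hφpos x hx.le).ne'
      (hφ.hasDerivAt_derivWithin_Ici two_ne_zero hx).differentiableAt
      (hv.hasDerivAt_derivWithin_Ici two_ne_zero hx).differentiableAt)
    (fun x hx => by have := hφpos x hx; have := hapos x hx; positivity)
    (fun x hx h => exp_neg_mul_mul_sq_mul_div_sq_le (hMη x hx) (hapos x hx) (hMa x hx)
      (hφpos x hx) (hv_pos x hx h) (hK ⟨x, hx, rfl⟩))
    (fun h => weightedWronskian_zero_nonneg (hφpos 0 le_rfl).le (hv_pos 0 le_rfl h).le hBφ hrobin)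
    hx
  simpa using (div_le_iff₀ (hφpos x hx)).1 hratio

/-- Assume `a, b, c` bounded and locally `α`-Hölder on `[0,∞)`, `a` `C¹` with locally
`α`-Hölder derivative and `a > 0`; assume the bounded-drift condition (`η' = -b/a` for a
bounded `C¹` function `η`) and `λ₁ > 0`. Then `(L, B)` satisfies the Maximum Principle
on `(0,∞)`. -/
theorem robin_maximum_principle_of_lambda1_pos
    {α : ℝ} (hα : α ∈ Set.Ioo (0 : ℝ) 1) (γ : ℝ)
    (a b c : ℝ → ℝ)
    (habdd : ∃ M : ℝ, ∀ x : ℝ, 0 ≤ x → |a x| ≤ M)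
    (hbbdd : ∃ M : ℝ, ∀ x : ℝ, 0 ≤ x → |b x| ≤ M)
    (hcbdd : ∃ M : ℝ, ∀ x : ℝ, 0 ≤ x → |c x| ≤ M)
    (haH : LocHolderOn α a (Set.Ici 0))
    (hbH : LocHolderOn α b (Set.Ici 0))
    (hcH : LocHolderOn α c (Set.Ici 0))
    (haC1 : ContDiffOn ℝ 1 a (Set.Ici 0))
    (haDH : LocHolderOn α (fun x => derivWithin a (Set.Ici 0) x) (Set.Ici 0))
    (hapos : ∀ x : ℝ, 0 ≤ x → 0 < a x)
    (hdrift : ∃ η : ℝ → ℝ, ContDiffOn ℝ 1 η (Set.Ici 0) ∧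
      (∃ M : ℝ, ∀ x : ℝ, 0 ≤ x → |η x| ≤ M) ∧
      ∀ x : ℝ, 0 ≤ x → derivWithin η (Set.Ici 0) x = -(b x / a x))
    (hpos : 0 < lambda1Robin a b c γ)
    (v : ℝ → ℝ) (hv : ContDiffOn ℝ 2 v (Set.Ici 0))
    (hsub : ∀ x : ℝ, 0 < x → L1 a b c v x ≤ 0)
    (hrobin : -(a 0 * derivWithin v (Set.Ici 0) 0) + γ * v 0 ≤ 0)
    (hbdd : BddAbove (v '' Set.Ici 0)) :
    ∀ x : ℝ, 0 ≤ x → v x ≤ 0 :=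
  robin_maximum_principle_of_lambda1_pos_general γ a b c habdd haC1 hapos hdrift hpos v hv hsub
    hrobin hbdd
end

section
/- For every δ ∈ ℝ, the generalized principal eigenvalue of L u = -u'' + δ u' on ℝ equals δ²/4, i.e. sup{λ ∈ ℝ : there exists φ ∈ C²(ℝ) with φ > 0 on ℝ and -φ'' + δφ' ≥ λφ on ℝ} = δ²/4. In particular, for δ ≠ 0 one has λ₁ > 0, while the constant function 1 is a positive bounded subsolution (L1 = 0 ≤ 0), so the Maximum Principle fails even though λ₁ > 0. -/
/-!
The exponential `exp (δ x / 2)` satisfies `L φ = (δ²/4) φ`, so `λ₁ ≥ δ²/4`. Conversely, if `φ > 0`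
satisfies `L φ ≥ l φ` with `l > δ²/4`, then `q = φ'/φ - δ/2` obeys the Riccati inequality
`q' ≤ -(q² + c)` with `c = l - δ²/4 > 0`. Then `arctan (q / √c) / √c` decreases with slope at
most `-1` on all of `ℝ` while staying in an interval of length `π / √c`, which is absurd.
-/

open Real

theorem false_of_forall_deriv_le_neg_sq_add {q q' : ℝ → ℝ} {c : ℝ} (hc : 0 < c)
    (hq : ∀ x, HasDerivAt q (q' x) x) (hq' : ∀ x, q' x ≤ -(q x ^ 2 + c)) : False := by
  set s := √c
  have hs : 0 < s := sqrt_pos.mpr hc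
  have hs2 : s ^ 2 = c := sq_sqrt hc.le
  set f : ℝ → ℝ := fun x => arctan (q x / s) / s + x
  have hf : ∀ x, HasDerivAt f (1 / (1 + (q x / s) ^ 2) * (q' x / s) / s + 1) x := fun x =>
    ((((hq x).div_const s).arctan).div_const s).add (hasDerivAt_id x)
  have hf' : ∀ x, 1 / (1 + (q x / s) ^ 2) * (q' x / s) / s + 1 ≤ 0 := by
    intro x
    have hpos : 0 < s ^ 2 + q x ^ 2 := by positivity
    have hslope : 1 / (1 + (q x / s) ^ 2) * (q' x / s) / s = q' x / (s ^ 2 + q x ^ 2) := by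
      field_simp
    rw [hslope, ← le_neg_iff_add_nonpos_right, div_le_iff₀ hpos]
    linarith [hq' x]
  have hanti : Antitone f := antitone_of_hasDerivAt_nonpos hf hf'
  have hle : f (π / s + 1) ≤ f 0 := hanti (by positivity)
  have hupper : arctan (q 0 / s) / s < π / 2 / s :=
    div_lt_div_of_pos_right (arctan_lt_pi_div_two _) hs
  have hlower : -(π / 2) / s < arctan (q (π / s + 1) / s) / s :=
    div_lt_div_of_pos_right (neg_pi_div_two_lt_arctan _) hs
  have hhalf : π / 2 / s + π / 2 / s = π / s := by ring
  simp only [f, add_zero] at hle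
  rw [neg_div] at hlower
  linarith

def IsDriftSupersolution (δ l : ℝ) (φ : ℝ → ℝ) : Prop :=
  ContDiff ℝ 2 φ ∧ (∀ x, 0 < φ x) ∧ ∀ x, l * φ x ≤ -(deriv (deriv φ) x) + δ * deriv φ x

theorem isDriftSupersolution_exp (δ a : ℝ) :
    IsDriftSupersolution δ (δ * a - a ^ 2) (fun x => exp (a * x)) := by
  have hφ : ∀ x, HasDerivAt (fun x => exp (a * x)) (a * exp (a * x)) x := fun x => by
    simpa [mul_comm] using ((hasDerivAt_id x).const_mul a).exp
  have hφ' : deriv (fun x => exp (a * x)) = fun x => a * exp (a * x) := funext fun x => (hφ x).deriv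
  refine ⟨(contDiff_const.mul contDiff_id).exp, fun x => exp_pos _, fun x => ?_⟩
  rw [hφ', ((hφ x).const_mul a).deriv]
  exact le_of_eq (by ring)

theorem IsDriftSupersolution.exists_riccati {δ l : ℝ} {φ : ℝ → ℝ}
    (h : IsDriftSupersolution δ l φ) :
    ∃ q q' : ℝ → ℝ, (∀ x, HasDerivAt q (q' x) x) ∧ ∀ x, q' x ≤ -(q x ^ 2 + (l - δ ^ 2 / 4)) := by
  obtain ⟨hφ, hpos, hL⟩ := h
  have hd1 : ∀ x, HasDerivAt φ (deriv φ x) x := fun x =>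
    (hφ.differentiable two_ne_zero x).hasDerivAt
  have hd2 : ∀ x, HasDerivAt (deriv φ) (deriv (deriv φ) x) x := fun x =>
    (hφ.differentiable_deriv_two x).hasDerivAt
  refine ⟨fun x => deriv φ x / φ x - δ / 2,
    fun x => (deriv (deriv φ) x * φ x - deriv φ x * deriv φ x) / φ x ^ 2,
    fun x => ((hd2 x).div (hd1 x) (hpos x).ne').sub_const _, fun x => ?_⟩
  have hφx := hpos x
  have hLx := mul_le_mul_of_nonneg_right (hL x) hφx.le
  have hrhs : -((deriv φ x / φ x - δ / 2) ^ 2 + (l - δ ^ 2 / 4)) =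
      -((deriv φ x - δ / 2 * φ x) ^ 2 + (l - δ ^ 2 / 4) * φ x ^ 2) / φ x ^ 2 := by
    field_simp
  rw [hrhs, div_le_div_iff_of_pos_right (by positivity)]
  nlinarith

theorem IsDriftSupersolution.le {δ l : ℝ} {φ : ℝ → ℝ} (h : IsDriftSupersolution δ l φ) :
    l ≤ δ ^ 2 / 4 := by
  by_contra! hl
  obtain ⟨q, q', hq, hq'⟩ := h.exists_riccati
  exact false_of_forall_deriv_le_neg_sq_add (sub_pos.mpr hl) hq hq'

theorem isGreatest_driftSupersolution (δ : ℝ) :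
    IsGreatest {l | ∃ φ, IsDriftSupersolution δ l φ} (δ ^ 2 / 4) := by
  refine ⟨⟨fun x => exp (δ / 2 * x), ?_⟩, fun l ⟨_, h⟩ => h.le⟩
  convert isDriftSupersolution_exp δ (δ / 2) using 1
  ring

/-- For every `δ ∈ ℝ`, the generalized principal eigenvalue of `L u = -u'' + δ u'` on `ℝ`
equals `δ²/4`; in particular, for `δ ≠ 0` one has `λ₁ > 0` while the constant `1` is a
positive bounded subsolution, so the Maximum Principle fails although `λ₁ > 0`. -/
theorem lambda1_of_drift_operator (δ : ℝ) :
    sSup {l : ℝ | ∃ φ : ℝ → ℝ, ContDiff ℝ 2 φ ∧ (∀ x, 0 < φ x) ∧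
        ∀ x, l * φ x ≤ -(deriv (deriv φ) x) + δ * deriv φ x} = δ ^ 2 / 4 ∧
      (δ ≠ 0 →
        0 < sSup {l : ℝ | ∃ φ : ℝ → ℝ, ContDiff ℝ 2 φ ∧ (∀ x, 0 < φ x) ∧
          ∀ x, l * φ x ≤ -(deriv (deriv φ) x) + δ * deriv φ x} ∧
        ∃ v : ℝ → ℝ, ContDiff ℝ 2 v ∧ (∀ x, 0 < v x) ∧ BddAbove (Set.range v) ∧
          (∀ x, -(deriv (deriv v) x) + δ * deriv v x ≤ 0) ∧ ¬∀ x, v x ≤ 0) := by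
  have hsup : sSup {l | ∃ φ, IsDriftSupersolution δ l φ} = δ ^ 2 / 4 :=
    (isGreatest_driftSupersolution δ).csSup_eq
  refine ⟨hsup, fun hδ => ⟨hsup ▸ by positivity, fun _ => 1, contDiff_const, fun _ => one_pos,
    ⟨1, by rintro _ ⟨_, rfl⟩; rfl⟩, fun x => by simp, fun h => ?_⟩⟩
  linarith [h 0]
end

section
/- Let γ > 0. Then (L, B) with L u = -u'' on (0,∞) and B u = -u'(0) + γ u(0) satisfies the Maximum Principle: every v ∈ C²([0,∞)) with sup_{[0,∞)} v < +∞, v''(x) ≥ 0 for all x > 0 (i.e. -v'' ≤ 0), and -v'(0) + γ v(0) ≤ 0 satisfies v(x) ≤ 0 for all x ≥ 0. -/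
/-!
A `C²` function with `v'' ≥ 0` is convex, and a convex function that is bounded above on a
half-line is nonincreasing there: otherwise a positive secant slope forces linear growth. Hence
`v'(0) ≤ 0`, the Robin condition gives `γ v(0) ≤ v'(0) ≤ 0`, and `v ≤ v(0) ≤ 0`.
-/

open Set

theorem ConvexOn.antitoneOn_of_bddAbove {𝕜 : Type*} [Field 𝕜] [LinearOrder 𝕜]
    [IsStrictOrderedRing 𝕜] {s : Set 𝕜} {f : 𝕜 → 𝕜} (hf : ConvexOn 𝕜 s f)
    (hs : ¬BddAbove s) (hbdd : BddAbove (f '' s)) : AntitoneOn f s := by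
  rintro x hx y - hxy
  obtain ⟨M, hM⟩ := hbdd
  by_contra! hlt
  have hxy' : x < y := lt_of_le_of_ne hxy (by rintro rfl; exact lt_irrefl _ hlt)
  set c := (f y - f x) / (y - x)
  have hc : 0 < c := div_pos (sub_pos.2 hlt) (sub_pos.2 hxy')
  obtain ⟨z, hz, hzbig⟩ := not_bddAbove_iff.1 hs (max y (y + (M - f y) / c))
  have hyz : y < z := (le_max_left _ _).trans_lt hzbig
  have hslope : c ≤ (f z - f y) / (z - y) := hf.slope_mono_adjacent hx hz hxy' hyz
  have hgrowth : M - f y < c * (z - y) := by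
    rw [← div_lt_iff₀' hc]
    linarith [(le_max_right _ _).trans_lt hzbig]
  have hfz : f z ≤ M := hM ⟨z, hz, rfl⟩
  have hrise : c * (z - y) ≤ f z - f y := (le_div_iff₀ (sub_pos.2 hyz)).1 hslope
  linarith

theorem ContDiffOn.convexOn_of_deriv2_nonneg {D : Set ℝ} (hD : Convex ℝ D) {f : ℝ → ℝ}
    (hf : ContDiffOn ℝ 2 f D) (hf'' : ∀ x ∈ interior D, 0 ≤ deriv (deriv f) x) :
    ConvexOn ℝ D f := by
  have hint : ContDiffOn ℝ 2 f (interior D) := hf.mono interior_subset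
  refine _root_.convexOn_of_deriv2_nonneg hD hf.continuousOn (hint.differentiableOn two_ne_zero)
    ?_ hf''
  exact (hint.deriv_of_isOpen isOpen_interior (by norm_num)).differentiableOn one_ne_zero

/-- For `γ > 0`, the operator `L u = -u''` on `(0,∞)` with Robin boundary operator
`B u = -u'(0) + γ u(0)` satisfies the Maximum Principle: every `v ∈ C²([0,∞))` with
finite supremum, `-v'' ≤ 0` on `(0,∞)` and `-v'(0) + γ v(0) ≤ 0` is nonpositive. -/
theorem robin_laplacian_maximum_principle
    (γ : ℝ) (hγ : 0 < γ)
    (v : ℝ → ℝ) (hv : ContDiffOn ℝ 2 v (Set.Ici 0))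
    (hbdd : BddAbove (v '' Set.Ici 0))
    (hsub : ∀ x : ℝ, 0 < x → 0 ≤ deriv (deriv v) x)
    (hrobin : -(derivWithin v (Set.Ici 0) 0) + γ * v 0 ≤ 0) :
    ∀ x : ℝ, 0 ≤ x → v x ≤ 0 := by
  have hconvex : ConvexOn ℝ (Ici 0) v :=
    hv.convexOn_of_deriv2_nonneg (convex_Ici 0) fun x hx => hsub x (by simpa using hx)
  have hanti : AntitoneOn v (Ici 0) := hconvex.antitoneOn_of_bddAbove (not_bddAbove_Ici 0) hbdd
  have hv0 : v 0 ≤ 0 := by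
    have : γ * v 0 ≤ 0 := by linarith [hanti.derivWithin_nonpos (x := 0)]
    exact nonpos_of_mul_nonpos_right this hγ
  intro x hx
  exact (hanti self_mem_Ici hx hx).trans hv0
end

section
/- There exist functions u₊, u₋ ∈ C²(ℝ), both everywhere positive, both solving -u'' - c(x) u = 0 on ℝ, and linearly independent; specifically u₊ satisfies u₊(1) = 1, u₊'(1) = 0, is nonincreasing, nonconstant, and identically equal to 1 on [1,∞), while u₋ satisfies u₋(-1) = 1, u₋'(-1) = 0, is nondecreasing, nonconstant, and identically equal to 1 on (-∞,-1]. In particular the eigenvalue 0 of L u = -u'' - c u on ℝ admits two linearly independent positive eigenfunctions, so it is not simple. -/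
/-!
Put `a = -c ≥ 0`. The solution of `u'' = a u`, `u 1 = 1`, `u' 1 = 0` is a fixed point of the
Volterra operator `u ↦ 1 + ∫ₓ¹ (t - x) a(t) u(t) dt`; its `n`-th iterate is
`(4M)ⁿ/n!`-Lipschitz on `C([-1, 1])`, so it has a fixed point. At the largest zero `s` of such
a solution the equation would give `u s ≥ 1`, hence `u > 0`; then `u' = -∫ₓ¹ a u ≤ 0`,
`u = 1` on `[1, ∞)` and `u (-1) > 1`. Reflecting the construction for `c (-x)` gives the
nondecreasing solution, and `uP = t uM` is impossible: evaluating at `-1` gives `t > 1`,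
evaluating at `1` gives `t < 1`.
-/

open intervalIntegral Set Function
open scoped Nat

theorem exists_isFixedPt_of_dist_iterate_le {X : Type*} [MetricSpace X] [CompleteSpace X]
    [Nonempty X] {T : X → X} (C : ℝ)
    (hT : ∀ n x y, dist (T^[n] x) (T^[n] y) ≤ C ^ n / n ! * dist x y) : ∃ x, IsFixedPt T x := by
  obtain ⟨n, hn⟩ :=
    ((FloorSemiring.tendsto_pow_div_factorial_atTop C).eventually (gt_mem_nhds one_pos)).exists
  have hcontr : ContractingWith (C ^ n / n !).toNNReal T^[n] :=
    ⟨Real.toNNReal_lt_one.2 hn, LipschitzWith.of_dist_le_mul fun x y =>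
      (hT n x y).trans (mul_le_mul_of_nonneg_right (Real.le_coe_toNNReal _) dist_nonneg)⟩
  exact ⟨_, hcontr.isFixedPt_fixedPoint_iterate⟩

theorem integral_mul_pow_one_sub_div_factorial (L x : ℝ) (n : ℕ) :
    ∫ t in x..1, L * (L * (1 - t)) ^ n / n ! = (L * (1 - x)) ^ (n + 1) / (n + 1)! := by
  have hint : ∫ t in x..1, (1 - t) ^ n = (1 - x) ^ (n + 1) / (n + 1) := by
    rw [integral_comp_sub_left (fun t => t ^ n), integral_pow]
    simp
  simp_rw [mul_pow, div_eq_mul_inv]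
  rw [show (fun t => L * (L ^ n * (1 - t) ^ n) * (n ! : ℝ)⁻¹)
      = fun t => (L ^ (n + 1) * (n ! : ℝ)⁻¹) * (1 - t) ^ n by funext t; ring,
    integral_const_mul, hint, Nat.factorial_succ]
  push_cast
  field_simp

theorem hasDerivAt_integral_sub_mul {w : ℝ → ℝ} (hw : Continuous w) (b x : ℝ) :
    HasDerivAt (fun y => ∫ t in y..b, (t - y) * w t) (-∫ t in x..b, w t) x := by
  have hxw : Continuous fun t => t * w t := continuous_id.mul hw
  have hleft {g : ℝ → ℝ} (hg : Continuous g) : HasDerivAt (fun y => ∫ t in y..b, g t) (-g x) x :=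
    integral_hasDerivAt_left (hg.intervalIntegrable _ _) (hg.stronglyMeasurableAtFilter _ _)
      hg.continuousAt
  have hsplit : (fun y => ∫ t in y..b, (t - y) * w t)
      = fun y => (∫ t in y..b, t * w t) - y * ∫ t in y..b, w t := by
    funext y
    simp only [sub_mul]
    rw [integral_sub (hxw.intervalIntegrable _ _)
      ((by fun_prop : Continuous fun t => y * w t).intervalIntegrable _ _), integral_const_mul]
  rw [hsplit]
  exact ((hleft hxw).fun_sub ((hasDerivAt_id' x).fun_mul (hleft hw))).congr_deriv (by ring)

/-- The integral operator whose fixed points solve `u'' = a u` with `u 1 = 1`, `u' 1 = 0`. -/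
noncomputable def volterra (a f : ℝ → ℝ) (x : ℝ) : ℝ :=
  1 + ∫ t in x..1, (t - x) * (a t * f t)

section Volterra

variable {a f : ℝ → ℝ}

theorem hasDerivAt_volterra (ha : Continuous a) (hf : Continuous f) (x : ℝ) :
    HasDerivAt (volterra a f) (-∫ t in x..1, a t * f t) x :=
  (hasDerivAt_integral_sub_mul (ha.mul hf) 1 x).const_add 1

theorem continuous_volterra (ha : Continuous a) (hf : Continuous f) : Continuous (volterra a f) :=
  continuous_iff_continuousAt.2 fun x => (hasDerivAt_volterra ha hf x).continuousAt

theorem integral_eq_zero_of_one_le {g : ℝ → ℝ} (hg : ∀ t, 1 ≤ t → g t = 0) {x : ℝ} (hx : 1 ≤ x) :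
    ∫ t in x..1, g t = 0 := by
  rw [integral_congr fun t ht => hg t (by simpa [hx] using ht.1)]
  simp

theorem volterra_of_one_le (ha : ∀ t, 1 ≤ t → a t = 0) {x : ℝ} (hx : 1 ≤ x) :
    volterra a f x = 1 := by
  rw [volterra, integral_eq_zero_of_one_le (fun t ht => by simp [ha t ht]) hx, add_zero]

theorem volterra_congr {g : ℝ → ℝ} (h : ∀ t, a t * f t = a t * g t) :
    volterra a f = volterra a g := by
  funext x
  simp only [volterra, h]

/-- On `C([-1, 1])` the sup metric is complete and `volterra` has a contracting iterate. -/
noncomputable def volterraOnIcc (a : ℝ → ℝ) (ha : Continuous a) (f : C(Icc (-1 : ℝ) 1, ℝ)) :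
    C(Icc (-1 : ℝ) 1, ℝ) :=
  ⟨fun x => volterra a (IccExtend (neg_le_self zero_le_one) f) x,
    (continuous_volterra ha f.continuous.Icc_extend').comp continuous_subtype_val⟩

theorem abs_volterraOnIcc_iterate_sub_le (ha : Continuous a) {M : ℝ}
    (hM : ∀ t ∈ Icc (-1 : ℝ) 1, |a t| ≤ M) (n : ℕ) (f g : C(Icc (-1 : ℝ) 1, ℝ))
    (x : Icc (-1 : ℝ) 1) :
    |(volterraOnIcc a ha)^[n] f x - (volterraOnIcc a ha)^[n] g x|
      ≤ dist f g * (2 * M * (1 - x)) ^ n / n ! := by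
  induction n generalizing x with
  | zero => simpa [Real.dist_eq] using ContinuousMap.dist_apply_le_dist (f := f) (g := g) x
  | succ n ih =>
    set F := (volterraOnIcc a ha)^[n] f
    set G := (volterraOnIcc a ha)^[n] g
    set e : (Icc (-1 : ℝ) 1 → ℝ) → ℝ → ℝ := IccExtend (neg_le_self zero_le_one)
    have he (H : C(Icc (-1 : ℝ) 1, ℝ)) {t : ℝ} (ht : t ∈ Icc (-1 : ℝ) 1) : e H t = H ⟨t, ht⟩ :=
      IccExtend_of_mem _ _ ht
    obtain ⟨x, hx⟩ := x
    have hcont (H : C(Icc (-1 : ℝ) 1, ℝ)) : Continuous fun t => (t - x) * (a t * e H t) := by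
      fun_prop
    have hdiff : volterraOnIcc a ha F ⟨x, hx⟩ - volterraOnIcc a ha G ⟨x, hx⟩
        = ∫ t in x..1, (t - x) * a t * (e F t - e G t) := by
      simp only [volterraOnIcc, ContinuousMap.coe_mk, volterra, add_sub_add_left_eq_sub]
      rw [← integral_sub ((hcont F).intervalIntegrable _ _) ((hcont G).intervalIntegrable _ _)]
      simp only [mul_sub, mul_assoc]
    have hbound : ∀ t ∈ Ioc x 1, ‖(t - x) * a t * (e F t - e G t)‖
        ≤ dist f g * (2 * M * (2 * M * (1 - t)) ^ n / n !) := by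
      intro t ht
      have ht' : t ∈ Icc (-1 : ℝ) 1 := ⟨hx.1.trans ht.1.le, ht.2⟩
      have htx : |t - x| ≤ 2 := by rw [abs_le]; constructor <;> linarith [ht.1, ht.2, hx.1]
      have hM0 : 0 ≤ M := (abs_nonneg _).trans (hM t ht')
      rw [he F ht', he G ht', Real.norm_eq_abs, abs_mul, abs_mul]
      calc |t - x| * |a t| * |F ⟨t, ht'⟩ - G ⟨t, ht'⟩|
          ≤ 2 * M * (dist f g * (2 * M * (1 - t)) ^ n / n !) := by
            gcongr
            exacts [hM t ht', ih ⟨t, ht'⟩]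
        _ = _ := by ring
    rw [iterate_succ_apply', iterate_succ_apply', hdiff, ← Real.norm_eq_abs]
    refine (norm_integral_le_of_norm_le hx.2 (Filter.Eventually.of_forall hbound) ?_).trans_eq ?_
    · exact (by fun_prop : Continuous _).intervalIntegrable _ _
    · rw [integral_const_mul, integral_mul_pow_one_sub_div_factorial, mul_div_assoc]

theorem dist_volterraOnIcc_iterate_le (ha : Continuous a) {M : ℝ}
    (hM : ∀ t ∈ Icc (-1 : ℝ) 1, |a t| ≤ M) (n : ℕ) (f g : C(Icc (-1 : ℝ) 1, ℝ)) :
    dist ((volterraOnIcc a ha)^[n] f) ((volterraOnIcc a ha)^[n] g)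
      ≤ (4 * M) ^ n / n ! * dist f g := by
  have hM0 : 0 ≤ M := (abs_nonneg _).trans (hM 0 (by norm_num))
  refine (ContinuousMap.dist_le (by positivity)).2 fun x => ?_
  have hx : 0 ≤ 1 - (x : ℝ) ∧ 1 - (x : ℝ) ≤ 2 := by constructor <;> linarith [x.2.1, x.2.2]
  calc dist ((volterraOnIcc a ha)^[n] f x) ((volterraOnIcc a ha)^[n] g x)
      ≤ dist f g * (2 * M * (1 - x)) ^ n / n ! := abs_volterraOnIcc_iterate_sub_le ha hM n f g x
    _ ≤ dist f g * (4 * M) ^ n / n ! := by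
      gcongr dist f g * ?_ ^ n / _
      · exact mul_nonneg (by positivity) hx.1
      · nlinarith
    _ = (4 * M) ^ n / n ! * dist f g := by ring

theorem exists_continuous_volterra_eq_self (ha : Continuous a)
    (ha_zero : ∀ t, 1 ≤ |t| → a t = 0) : ∃ u, Continuous u ∧ volterra a u = u := by
  obtain ⟨M, hM⟩ := isCompact_Icc.exists_bound_of_continuousOn ha.continuousOn
  obtain ⟨u₀, hu₀⟩ := exists_isFixedPt_of_dist_iterate_le (4 * M)
    (dist_volterraOnIcc_iterate_le ha (M := M) hM)
  set u := IccExtend (neg_le_self zero_le_one) u₀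
  -- `u` itself solves the equation only on `[-1, 1]`, but that is where `a` lives.
  have hagree : ∀ t, a t * volterra a u t = a t * u t := by
    intro t
    by_cases ht : 1 ≤ |t|
    · simp [ha_zero t ht]
    · have ht' : t ∈ Icc (-1 : ℝ) 1 := abs_le.1 (not_le.1 ht).le
      rw [show u t = u₀ ⟨t, ht'⟩ from IccExtend_of_mem _ _ ht', ← hu₀]
      rfl
  exact ⟨volterra a u, continuous_volterra ha u₀.continuous.Icc_extend', volterra_congr hagree⟩

end Volterra

section Solution

variable {a u : ℝ → ℝ}

theorem hasDerivAt_of_volterra_eq_self (ha : Continuous a) (hu : Continuous u)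
    (hfix : volterra a u = u) (x : ℝ) : HasDerivAt u (-∫ t in x..1, a t * u t) x := by
  simpa only [hfix] using hasDerivAt_volterra ha hu x

theorem deriv_of_volterra_eq_self (ha : Continuous a) (hu : Continuous u)
    (hfix : volterra a u = u) : deriv u = fun x => -∫ t in x..1, a t * u t :=
  funext fun x => (hasDerivAt_of_volterra_eq_self ha hu hfix x).deriv

theorem hasDerivAt_deriv_of_volterra_eq_self (ha : Continuous a) (hu : Continuous u)
    (hfix : volterra a u = u) (x : ℝ) : HasDerivAt (deriv u) (a x * u x) x := by
  have hw : Continuous fun t => a t * u t := ha.mul hu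
  rw [deriv_of_volterra_eq_self ha hu hfix, ← neg_neg (a x * u x)]
  exact (integral_hasDerivAt_left (hw.intervalIntegrable _ _) (hw.stronglyMeasurableAtFilter _ _)
    hw.continuousAt).neg

theorem contDiff_two_of_volterra_eq_self (ha : Continuous a) (hu : Continuous u)
    (hfix : volterra a u = u) : ContDiff ℝ 2 u := by
  rw [show (2 : WithTop ℕ∞) = 1 + 1 by norm_num, contDiff_succ_iff_deriv,
    contDiff_one_iff_deriv]
  refine ⟨fun x => (hasDerivAt_of_volterra_eq_self ha hu hfix x).differentiableAt, by simp,
    fun x => (hasDerivAt_deriv_of_volterra_eq_self ha hu hfix x).differentiableAt, ?_⟩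
  rw [show deriv (deriv u) = fun x => a x * u x from
    funext fun x => (hasDerivAt_deriv_of_volterra_eq_self ha hu hfix x).deriv]
  exact ha.mul hu

theorem pos_of_volterra_eq_self (ha0 : ∀ t, 0 ≤ a t) (ha1 : ∀ t, 1 ≤ t → a t = 0)
    (hu : Continuous u) (hfix : volterra a u = u) (x : ℝ) : 0 < u x := by
  by_contra! hx
  have hone (y : ℝ) (hy : 1 ≤ y) : u y = 1 := hfix ▸ volterra_of_one_le ha1 hy
  have hbdd : BddAbove {y | u y ≤ 0} :=
    ⟨1, fun y hy => not_lt.1 fun h => by linarith [hone y h.le, show u y ≤ 0 from hy]⟩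
  set s := sSup {y | u y ≤ 0}
  have hs : u s ≤ 0 := (isClosed_le hu continuous_const).csSup_mem ⟨x, hx⟩ hbdd
  have hs1 : s ≤ 1 := not_lt.1 fun h => by linarith [hone s h.le]
  have hpos (t : ℝ) (ht : s < t) : 0 < u t := not_le.1 fun h => (le_csSup hbdd h).not_gt ht
  have hint : 0 ≤ ∫ t in s..1, (t - s) * (a t * u t) := by
    refine integral_nonneg hs1 fun t ht => ?_
    rcases ht.1.eq_or_lt with rfl | hst
    · simp
    · exact mul_nonneg (sub_nonneg.2 ht.1) (mul_nonneg (ha0 t) (hpos t hst).le)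
  have hus : u s = 1 + ∫ t in s..1, (t - s) * (a t * u t) := by
    conv_lhs => rw [← hfix]
    rfl
  linarith

theorem antitone_of_volterra_eq_self (ha : Continuous a) (ha0 : ∀ t, 0 ≤ a t)
    (ha1 : ∀ t, 1 ≤ t → a t = 0) (hu : Continuous u) (hfix : volterra a u = u) : Antitone u := by
  refine antitone_of_deriv_nonpos
    (fun x => (hasDerivAt_of_volterra_eq_self ha hu hfix x).differentiableAt) fun x => ?_
  rw [deriv_of_volterra_eq_self ha hu hfix, neg_nonpos]
  rcases le_total x 1 with hx | hx
  · exact integral_nonneg hx fun t _ =>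
      mul_nonneg (ha0 t) (pos_of_volterra_eq_self ha0 ha1 hu hfix t).le
  · rw [integral_eq_zero_of_one_le (fun t ht => by simp [ha1 t ht]) hx]

theorem one_lt_of_volterra_eq_self (ha : Continuous a) (ha_pos : ∀ t ∈ Ioo (-1 : ℝ) 1, 0 < a t)
    (hu : Continuous u) (hfix : volterra a u = u)
    (hu_pos : ∀ x, 0 < u x) : 1 < u (-1) := by
  rw [← hfix, volterra, lt_add_iff_pos_right]
  refine intervalIntegral_pos_of_pos_on ((by fun_prop : Continuous _).intervalIntegrable _ _)
    (fun t ht => ?_) (by norm_num)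
  exact mul_pos (by linarith [ht.1]) (mul_pos (ha_pos t ht) (hu_pos t))

end Solution

theorem exists_antitone_solution (a : ℝ → ℝ) (ha : Continuous a)
    (ha_pos : ∀ x ∈ Ioo (-1 : ℝ) 1, 0 < a x) (ha_zero : ∀ x, 1 ≤ |x| → a x = 0) :
    ∃ u : ℝ → ℝ, ContDiff ℝ 2 u ∧ (∀ x, 0 < u x) ∧ (∀ x, deriv (deriv u) x = a x * u x) ∧
      u 1 = 1 ∧ deriv u 1 = 0 ∧ Antitone u ∧ 1 < u (-1) ∧ ∀ x, 1 ≤ x → u x = 1 := by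
  have ha0 (x : ℝ) : 0 ≤ a x := by
    by_cases hx : 1 ≤ |x|
    · exact (ha_zero x hx).ge
    · exact (ha_pos x (abs_lt.1 (not_le.1 hx))).le
  have ha1 (x : ℝ) (hx : 1 ≤ x) : a x = 0 := ha_zero x (hx.trans (le_abs_self x))
  obtain ⟨u, hu, hfix⟩ := exists_continuous_volterra_eq_self ha ha_zero
  have hone (x : ℝ) (hx : 1 ≤ x) : u x = 1 := hfix ▸ volterra_of_one_le ha1 hx
  have hpos := pos_of_volterra_eq_self ha0 ha1 hu hfix
  refine ⟨u, contDiff_two_of_volterra_eq_self ha hu hfix, hpos,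
    fun x => (hasDerivAt_deriv_of_volterra_eq_self ha hu hfix x).deriv, hone 1 le_rfl,
    by simp [deriv_of_volterra_eq_self ha hu hfix], antitone_of_volterra_eq_self ha ha0 ha1 hu hfix,
    one_lt_of_volterra_eq_self ha ha_pos hu hfix hpos, hone⟩

theorem deriv_deriv_comp_neg (f : ℝ → ℝ) (x : ℝ) :
    deriv (deriv fun y => f (-y)) x = deriv (deriv f) (-x) := by
  have h : deriv (fun y => f (-y)) = fun y => -deriv f (-y) := funext (deriv_comp_neg f)
  rw [h, deriv.fun_neg, deriv_comp_neg, neg_neg]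

/-- Let `c : ℝ → ℝ` be continuous with `c < 0` on `(-1,1)` and `c = 0` outside `(-1,1)`.
Then the operator `L u = -u'' - c u` on `ℝ` admits two linearly independent positive
eigenfunctions `u₊, u₋` for the eigenvalue `0`: `u₊(1) = 1`, `u₊'(1) = 0`, `u₊` is
nonincreasing, nonconstant and `≡ 1` on `[1,∞)`, while `u₋(-1) = 1`, `u₋'(-1) = 0`,
`u₋` is nondecreasing, nonconstant and `≡ 1` on `(-∞,-1]`. In particular the eigenvalue
`0` is not simple. -/
theorem not_simple_eigenvalue
    (c : ℝ → ℝ) (hc : Continuous c)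
    (hcneg : ∀ x ∈ Set.Ioo (-1 : ℝ) 1, c x < 0)
    (hczero : ∀ x : ℝ, 1 ≤ |x| → c x = 0) :
    ∃ uP uM : ℝ → ℝ,
      ContDiff ℝ 2 uP ∧ ContDiff ℝ 2 uM ∧
      (∀ x, 0 < uP x) ∧ (∀ x, 0 < uM x) ∧
      (∀ x, -(deriv (deriv uP) x) - c x * uP x = 0) ∧
      (∀ x, -(deriv (deriv uM) x) - c x * uM x = 0) ∧
      uP 1 = 1 ∧ deriv uP 1 = 0 ∧ Antitone uP ∧ (∃ x y, uP x ≠ uP y) ∧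
        (∀ x : ℝ, 1 ≤ x → uP x = 1) ∧
      uM (-1) = 1 ∧ deriv uM (-1) = 0 ∧ Monotone uM ∧ (∃ x y, uM x ≠ uM y) ∧
        (∀ x : ℝ, x ≤ -1 → uM x = 1) ∧
      ¬∃ t : ℝ, ∀ x, uP x = t * uM x := by
  obtain ⟨uP, hP_C2, hP_pos, hP_ode, hP1, hP'1, hP_anti, hP_gt, hP_one⟩ :=
    exists_antitone_solution (fun x => -c x) hc.neg (fun x hx => neg_pos.2 (hcneg x hx))
      (fun x hx => by simp [hczero x hx])
  obtain ⟨v, hv_C2, hv_pos, hv_ode, hv1, hv'1, hv_anti, hv_gt, hv_one⟩ :=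
    exists_antitone_solution (fun x => -c (-x)) (hc.comp continuous_neg).neg
      (fun x hx => neg_pos.2 (hcneg (-x) ⟨by linarith [hx.2], by linarith [hx.1]⟩))
      (fun x hx => by simp [hczero (-x) (by rwa [abs_neg])])
  refine ⟨uP, fun x => v (-x), hP_C2, hv_C2.comp contDiff_neg, hP_pos, fun x => hv_pos (-x),
    fun x => by rw [hP_ode]; ring, fun x => by rw [deriv_deriv_comp_neg, hv_ode, neg_neg]; ring,
    hP1, hP'1, hP_anti, ⟨-1, 1, by rw [hP1]; exact hP_gt.ne'⟩, hP_one, by simpa using hv1,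
    by rw [deriv_comp_neg, neg_neg, hv'1, neg_zero], fun x y hxy => hv_anti (neg_le_neg hxy),
    ⟨1, -1, by simpa [hv1] using hv_gt.ne'⟩, fun x hx => hv_one (-x) (by linarith), ?_⟩
  rintro ⟨t, ht⟩
  have h_neg : uP (-1) = t := by simpa [hv1] using ht (-1)
  have h_pos : uP 1 = t * v (-1) := ht 1
  rw [hP1] at h_pos
  nlinarith
end
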